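/- arXiv:1512.08476 — 4 statements merged into one kernel-verified Lean document; each statement's English description precedes it below -/
import Mathlib

section
/- Let T be a bounded linear operator on L² which is an integral operator induced by a kernel 𝐓 that is a K⁰-kernel, and let λ ∈ ℂ be a regular value for T. Then a resolvent kernel 𝐓_{|λ} for 𝐓 at λ exists, and it is a kernel of the Fredholm resolvent of T at λ; that is, (T_{|λ}f)(s) = ∫ 𝐓_{|λ}(s,t) f(t) dt for every f ∈ L² and almost every s ∈ ℝ. -/
open MeasureTheory Filter Topology ContinuousLinearMap
open scoped ENNReal NNReal

noncomputable section

/-- `L²(ℝ)`, the complex Hilbert space of square-integrable functions on `ℝ`. -/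
abbrev L2 : Type := MeasureTheory.Lp ℂ 2 (MeasureTheory.volume : MeasureTheory.Measure ℝ)

/-- Bounded linear operators on `L²`. -/
abbrev L2op : Type := L2 →L[ℂ] L2

/-- `T` is the integral operator induced by the kernel `K`:
`(Tf)(s) = ∫ K(s,t) f(t) dt` for every `f ∈ L²` and almost every `s`. -/
def IsInducedBy (T : L2op) (K : ℝ → ℝ → ℂ) : Prop :=
  ∀ f : L2, ∀ᵐ s : ℝ, (T f : ℝ → ℂ) s = ∫ t : ℝ, K s t * (f : ℝ → ℂ) t

/-- `K` is a `K⁰`-kernel with associated Carleman functions `kt`, `kt'`: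
`kt s = conj (K s ·)` and `kt' s = K · s` as elements of `L²`, the kernel is
continuous and vanishes at infinity, and both Carleman functions are continuous
and vanish at infinity in `L²`-norm. -/
structure IsK0Kernel (K : ℝ → ℝ → ℂ) (kt kt' : ℝ → L2) : Prop where
  repr_t : ∀ s : ℝ, (kt s : ℝ → ℂ) =ᵐ[volume] fun x => (starRingEnd ℂ) (K s x)
  repr_t' : ∀ s : ℝ, (kt' s : ℝ → ℂ) =ᵐ[volume] fun x => K x s
  cont : Continuous fun p : ℝ × ℝ => K p.1 p.2
  vanish : Tendsto (fun p : ℝ × ℝ => K p.1 p.2) (cocompact (ℝ × ℝ)) (𝓝 0)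
  cont_t : Continuous kt
  vanish_t : Tendsto kt (cocompact ℝ) (𝓝 0)
  cont_t' : Continuous kt'
  vanish_t' : Tendsto kt' (cocompact ℝ) (𝓝 0)

/-- The set `Π(T)` of regular values of `T`: those `λ` for which `I - λT` is invertible. -/
def regularSet (T : L2op) : Set ℂ := {lam : ℂ | IsUnit (1 - lam • T)}

/-- The resolvent `R_λ(T) = (I - λT)⁻¹` (junk value `0` if `λ ∉ Π(T)`). -/
def res (T : L2op) (lam : ℂ) : L2op := Ring.inverse (1 - lam • T)

/-- The Fredholm resolvent `T_{|λ} = T R_λ(T)`. -/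
def fres (T : L2op) (lam : ℂ) : L2op := T * res T lam

/-- The region of boundedness `∇_b({Sₙ})`. -/
def nablaB (S : ℕ → L2op) : Set ℂ :=
  {ζ : ℂ | ζ ≠ 0 ∧ ∃ M : ℝ, 0 < M ∧ ∃ N : ℕ, ∀ n > N,
      ζ ∈ regularSet (S n) ∧ ‖fres (S n) ζ‖ ≤ M}

/-- The region of strong convergence `∇_s({Sₙ})`: the `ζ ∈ ∇_b({Sₙ})` such that
the Fredholm resolvents `S_{n|ζ}` converge in the strong operator topology. -/
def nablaS (S : ℕ → L2op) : Set ℂ :=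
  {ζ : ℂ | ζ ∈ nablaB S ∧
    ∀ f : L2, ∃ g : L2, Tendsto (fun n => fres (S n) ζ f) atTop (𝓝 g)}

/-- Nuclear (trace class) operator on `L²`. -/
def IsNuclear (T : L2op) : Prop :=
  ∃ g h : ℕ → L2, Summable (fun k => ‖g k‖ * ‖h k‖) ∧
    ∀ f : L2, T f = ∑' k : ℕ, (inner ℂ f (g k) : ℂ) • h k

/-- The characteristic function `χ` of the interval `(-τ, τ)`, with complex values. -/
def chi (t : ℝ) (x : ℝ) : ℂ := Set.indicator (Set.Ioo (-t) t) 1 x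

/-- Condition (iv) for a `K⁰`-kernel `K` inducing `T`: the positive reals `τ n`
strictly increase to `+∞`, `P n` is the orthogonal projection given by multiplication
by `χₙ = chi (τ n)`, the subkernels `Kₙ(s,t) = χₙ(s)K(s,t)` and
`K̃ₙ(s,t) = χₙ(s)K(s,t)χₙ(t)` are `K⁰`-kernels, and the induced operators
`Tₙ = PₙT` and `T̃ₙ = PₙTPₙ` are nuclear. -/
structure ConditionIV (K : ℝ → ℝ → ℂ) (T : L2op) (tau : ℕ → ℝ) (P : ℕ → L2op) : Prop where
  pos : ∀ n, 0 < tau n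
  mono : StrictMono tau
  tendsto_top : Tendsto tau atTop atTop
  proj : ∀ n, ∀ f : L2, (P n f : ℝ → ℂ) =ᵐ[volume] fun x => chi (tau n) x * (f : ℝ → ℂ) x
  subker : ∀ n, ∃ kt kt' : ℝ → L2, IsK0Kernel (fun s t => chi (tau n) s * K s t) kt kt'
  subker' : ∀ n, ∃ kt kt' : ℝ → L2,
      IsK0Kernel (fun s t => chi (tau n) s * K s t * chi (tau n) t) kt kt'
  nuclear : ∀ n, IsNuclear (P n * T)
  nuclear' : ∀ n, IsNuclear (P n * T * P n)

/-- `λₙ(λ) = λ(1 - βₙλ)⁻¹`. -/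
def lamn (b : ℕ → ℂ) (lam : ℂ) (n : ℕ) : ℂ := lam * (1 - b n * lam)⁻¹

/-- The resolvent kernel for `K` at `λ` built from the resolvent Carleman function
`𝐭'_{|λ}(t) = R_λ(T)(kt' t)`:  `𝐓_{|λ}(s,t) = λ⟨𝐭'_{|λ}(t), 𝐭(s)⟩ + 𝐓(s,t)`
(the paper's inner product `⟨a,b⟩ = ∫ a conj b` is `inner b a` in Mathlib). -/
def resKer (T : L2op) (K : ℝ → ℝ → ℂ) (kt kt' : ℝ → L2) (lam : ℂ) (s t : ℝ) : ℂ :=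
  lam * (inner ℂ (kt s) (res T lam (kt' t)) : ℂ) + K s t

/-- The resolvent kernel for the subkernel `Kₙ` at `λ`:
`𝐓_{n|λ}(s,t) = λ χₙ(s) ⟨𝐭'_{n|λ}(t), 𝐭(s)⟩ + 𝐓ₙ(s,t)`, where
`𝐭'_{n|λ}(t) = R_λ(Tₙ) Pₙ (kt' t)` and `𝐓ₙ(s,t) = χₙ(s) 𝐓(s,t)`. -/
def resKerN (T : L2op) (K : ℝ → ℝ → ℂ) (kt kt' : ℝ → L2) (taun : ℝ) (Pn : L2op)
    (lam : ℂ) (s t : ℝ) : ℂ :=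
  lam * chi taun s * (inner ℂ (kt s) (res (Pn * T) lam (Pn (kt' t))) : ℂ) + chi taun s * K s t

/-- `R` is a resolvent kernel for the `K⁰`-kernel `K` at `λ` (Definition 2 of the paper):
`R` is a `K⁰`-kernel satisfying the two simultaneous integral equations and the
square-integrability condition. -/
def IsResolventKernel (K : ℝ → ℝ → ℂ) (lam : ℂ) (R : ℝ → ℝ → ℂ) : Prop :=
  (∃ rt rt' : ℝ → L2, IsK0Kernel R rt rt') ∧
  (∀ s t : ℝ, R s t - lam * ∫ x : ℝ, K s x * R x t = K s t) ∧
  (∀ s t : ℝ, R s t - lam * ∫ x : ℝ, R s x * K x t = K s t) ∧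
  (∀ f : L2, ∫⁻ s : ℝ, ((‖∫ t : ℝ, R s t * (f : ℝ → ℂ) t‖₊ : ℝ≥0) : ℝ≥0∞) ^ 2 < ⊤)

/-! Put `R = (I - λT)⁻¹`, so that `R = I + λTR = I + λRT`, and
`𝐓_{|λ}(s,t) = λ⟨R 𝐭'(t), 𝐭(s)⟩ + 𝐓(s,t)`. The operators `T` and `T*` act pointwise through the
Carleman functions, `(Tg)(s) = ⟨g, 𝐭(s)⟩` and `(T*h)(x) = ⟨h, 𝐭'(x)⟩`; the second is Fubini,
justified by Hölder's inequality and the boundedness of `‖𝐭'‖`. Applying the resolvent identities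
to `𝐭'(t)` and `𝐭(s)` then shows that `R 𝐭'(t)` and `R* 𝐭(s)` are the Carleman functions of
`𝐓_{|λ}`, and both integral equations and `(T_{|λ} f)(s) = ⟨R f, 𝐭(s)⟩ = ∫ 𝐓_{|λ}(s,t) f(t) dt`
become inner-product identities. Continuity and decay at infinity pass from `𝐭`, `𝐭'` through the
bounded operators `R`, `R*`. -/

open scoped InnerProductSpace

theorem exists_forall_norm_le_of_tendsto_cocompact {X E : Type*} [TopologicalSpace X]
    [SeminormedAddCommGroup E] {f : X → E} (hf : Continuous f)
    (hf0 : Tendsto f (cocompact X) (𝓝 0)) : ∃ C, ∀ x, ‖f x‖ ≤ C :=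
  (isBounded_iff_forall_norm_le.1 (ZeroAtInftyContinuousMap.isBounded_range ⟨⟨f, hf⟩, hf0⟩)).imp
    fun _ hC x => hC _ ⟨x, rfl⟩

theorem tendsto_inner_cocompact_prod {X Y E : Type*} [TopologicalSpace X] [TopologicalSpace Y]
    [NormedAddCommGroup E] [InnerProductSpace ℂ E] {a : X → E} {b : Y → E}
    (ha : Continuous a) (ha0 : Tendsto a (cocompact X) (𝓝 0))
    (hb : Continuous b) (hb0 : Tendsto b (cocompact Y) (𝓝 0)) :
    Tendsto (fun p : X × Y => ⟪a p.1, b p.2⟫_ℂ) (cocompact (X × Y)) (𝓝 0) := by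
  obtain ⟨A, hA⟩ := exists_forall_norm_le_of_tendsto_cocompact ha ha0
  obtain ⟨B, hB⟩ := exists_forall_norm_le_of_tendsto_cocompact hb hb0
  refine squeeze_zero_norm (fun p => norm_inner_le_norm (a p.1) (b p.2)) ?_
  rw [← Filter.coprod_cocompact, Filter.coprod, Filter.tendsto_sup]
  constructor
  · exact (tendsto_zero_iff_norm_tendsto_zero.1 (ha0.comp tendsto_comap)).zero_mul_isBoundedUnder_le
      ⟨B, eventually_map.2 (Eventually.of_forall fun p => by simpa using hB p.2)⟩
  · exact isBoundedUnder_le_mul_tendsto_zero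
      ⟨A, eventually_map.2 (Eventually.of_forall fun p => by simpa using hA p.1)⟩
      (tendsto_zero_iff_norm_tendsto_zero.1 (hb0.comp tendsto_comap))

theorem integral_mul_eq_inner {α : Type*} [MeasurableSpace α] {μ : Measure α}
    {f g : α → ℂ} {k l : Lp ℂ 2 μ} (hk : (k : α → ℂ) =ᵐ[μ] fun x => starRingEnd ℂ (f x))
    (hl : (l : α → ℂ) =ᵐ[μ] g) :
    ∫ x, f x * g x ∂μ = ⟪k, l⟫_ℂ := by
  rw [L2.inner_def]
  refine integral_congr_ae ?_
  filter_upwards [hk, hl] with x hkx hlx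
  rw [RCLike.inner_apply, hkx, hlx, Complex.conj_conj, mul_comm]

theorem MeasureTheory.L2.lintegral_enorm_inner_le {α E : Type*} [MeasurableSpace α] {μ : Measure α}
    [NormedAddCommGroup E] [InnerProductSpace ℂ E] (f g : Lp E 2 μ) :
    ∫⁻ x, ‖⟪f x, g x⟫_ℂ‖ₑ ∂μ ≤ ‖f‖ₑ * ‖g‖ₑ := by
  rw [← eLpNorm_one_eq_lintegral_enorm, Lp.enorm_def, Lp.enorm_def]
  simpa using eLpNorm_le_eLpNorm_mul_eLpNorm_of_nnnorm (p := 2) (q := 2) (r := 1)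
    (Lp.aestronglyMeasurable f) (Lp.aestronglyMeasurable g) (fun a b => ⟪a, b⟫_ℂ) 1
    (ae_of_all _ fun x => by simpa using nnnorm_inner_le_nnnorm (𝕜 := ℂ) (f x) (g x))

theorem MeasureTheory.L2.lintegral_nnnorm_sq_lt_top {α E : Type*} [MeasurableSpace α]
    {μ : Measure α} [NormedAddCommGroup E] (g : Lp E 2 μ) :
    ∫⁻ x, ((‖(g : α → E) x‖₊ : ℝ≥0) : ℝ≥0∞) ^ 2 ∂μ < ⊤ := by
  simpa [enorm_eq_nnnorm, ENNReal.rpow_two] using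
    lintegral_rpow_enorm_lt_top_of_eLpNorm_lt_top two_ne_zero ENNReal.ofNat_ne_top
      (Lp.eLpNorm_lt_top g)

theorem Ring.inverse_one_sub_eq_one_add_mul {R : Type*} [Ring R] {x : R} (h : IsUnit (1 - x)) :
    Ring.inverse (1 - x) = 1 + x * Ring.inverse (1 - x) := by
  have := Ring.mul_inverse_cancel _ h
  rwa [sub_mul, one_mul, sub_eq_iff_eq_add] at this

theorem Ring.inverse_one_sub_eq_one_add_inverse_mul {R : Type*} [Ring R] {x : R}
    (h : IsUnit (1 - x)) : Ring.inverse (1 - x) = 1 + Ring.inverse (1 - x) * x := by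
  have := Ring.inverse_mul_cancel _ h
  rwa [mul_sub, mul_one, sub_eq_iff_eq_add] at this

section Kernel

variable {T : L2op} {K : ℝ → ℝ → ℂ} {kt kt' : ℝ → L2}

theorem IsInducedBy.coeFn_apply_ae (hK : IsK0Kernel K kt kt') (hT : IsInducedBy T K) (g : L2) :
    (T g : ℝ → ℂ) =ᵐ[volume] fun s => ⟪kt s, g⟫_ℂ := by
  filter_upwards [hT g] with s hs
  rw [hs, integral_mul_eq_inner (hK.repr_t s) EventuallyEq.rfl]

theorem IsK0Kernel.integrable_conj_mul_prod (hK : IsK0Kernel K kt kt') (h : L2) {A : Set ℝ}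
    (hA : volume A ≠ ∞) :
    Integrable (Function.uncurry fun s x => starRingEnd ℂ (K s x) * (h : ℝ → ℂ) s)
      (volume.prod (volume.restrict A)) := by
  obtain ⟨C, hC⟩ := exists_forall_norm_le_of_tendsto_cocompact hK.cont_t' hK.vanish_t'
  have hmeas : AEStronglyMeasurable
      (Function.uncurry fun s x => starRingEnd ℂ (K s x) * (h : ℝ → ℂ) s)
      (volume.prod (volume.restrict A)) :=
    (Complex.continuous_conj.comp hK.cont).aestronglyMeasurable.mul
      (Lp.aestronglyMeasurable h).comp_fst
  have hinner : ∀ x, ∫⁻ s, ‖starRingEnd ℂ (K s x) * (h : ℝ → ℂ) s‖ₑ ≤ ENNReal.ofReal C * ‖h‖ₑ := by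
    intro x
    calc ∫⁻ s, ‖starRingEnd ℂ (K s x) * (h : ℝ → ℂ) s‖ₑ
        = ∫⁻ s, ‖⟪(kt' x : ℝ → ℂ) s, (h : ℝ → ℂ) s⟫_ℂ‖ₑ := by
          refine lintegral_congr_ae ?_
          filter_upwards [hK.repr_t' x] with s hs
          rw [RCLike.inner_apply, hs, mul_comm]
      _ ≤ ‖kt' x‖ₑ * ‖h‖ₑ := L2.lintegral_enorm_inner_le _ _
      _ ≤ ENNReal.ofReal C * ‖h‖ₑ := by
          gcongr
          rw [← ofReal_norm]
          exact ENNReal.ofReal_le_ofReal (hC x)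
  refine ⟨hmeas, ?_⟩
  calc ∫⁻ p, ‖Function.uncurry (fun s x => starRingEnd ℂ (K s x) * (h : ℝ → ℂ) s) p‖ₑ
          ∂(volume.prod (volume.restrict A))
      = ∫⁻ x in A, ∫⁻ s, ‖starRingEnd ℂ (K s x) * (h : ℝ → ℂ) s‖ₑ :=
        lintegral_prod_symm _ hmeas.enorm
    _ ≤ ∫⁻ _ in A, ENNReal.ofReal C * ‖h‖ₑ := lintegral_mono hinner
    _ < ∞ := by
        rw [setLIntegral_const]
        exact ENNReal.mul_lt_top (ENNReal.mul_lt_top ENNReal.ofReal_lt_top enorm_lt_top)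
          hA.lt_top

theorem IsInducedBy.coeFn_adjoint_apply_ae (hK : IsK0Kernel K kt kt') (hT : IsInducedBy T K)
    (h : L2) : (adjoint T h : ℝ → ℂ) =ᵐ[volume] fun x => ⟪kt' x, h⟫_ℂ := by
  obtain ⟨C, hC⟩ := exists_forall_norm_le_of_tendsto_cocompact hK.cont_t' hK.vanish_t'
  refine ae_eq_of_forall_setIntegral_eq_of_sigmaFinite
    (fun A _ hA => integrableOn_Lp_of_measure_ne_top _ one_le_two hA.ne)
    (fun A _ hA => Measure.integrableOn_of_bounded hA.ne
      (hK.cont_t'.inner continuous_const).aestronglyMeasurable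
      (ae_of_all _ fun x => (norm_inner_le_norm _ _).trans
        (mul_le_mul_of_nonneg_right (hC x) (norm_nonneg h)))) fun A hAm hA => ?_
  have hT_indicator : ∀ᵐ s, starRingEnd ℂ ((T (indicatorConstLp 2 hAm hA.ne (1 : ℂ)) : ℝ → ℂ) s)
      = ∫ x in A, starRingEnd ℂ (K s x) := by
    filter_upwards [hT.coeFn_apply_ae hK _] with s hs
    rw [hs, inner_conj_symm, L2.inner_indicatorConstLp_one]
    exact setIntegral_congr_ae₀ hAm.nullMeasurableSet ((hK.repr_t s).mono fun x hx _ => hx)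
  calc ∫ x in A, (adjoint T h : ℝ → ℂ) x
      = ⟪T (indicatorConstLp 2 hAm hA.ne (1 : ℂ)), h⟫_ℂ := by
        rw [← adjoint_inner_right, L2.inner_indicatorConstLp_one]
    _ = ∫ s, ∫ x in A, starRingEnd ℂ (K s x) * (h : ℝ → ℂ) s := by
        rw [L2.inner_def]
        refine integral_congr_ae ?_
        filter_upwards [hT_indicator] with s hs
        rw [RCLike.inner_apply, hs, integral_mul_const, mul_comm]
    _ = ∫ x in A, ∫ s, starRingEnd ℂ (K s x) * (h : ℝ → ℂ) s :=
        integral_integral_swap (hK.integrable_conj_mul_prod h hA.ne)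
    _ = ∫ x in A, ⟪kt' x, h⟫_ℂ := by
        refine setIntegral_congr_fun hAm fun x _ => integral_mul_eq_inner ?_ EventuallyEq.rfl
        simpa using hK.repr_t' x

end Kernel

theorem IsInducedBy.lintegral_sq_lt_top {S : L2op} {R : ℝ → ℝ → ℂ} (hS : IsInducedBy S R)
    (f : L2) : ∫⁻ s, ((‖∫ t, R s t * (f : ℝ → ℂ) t‖₊ : ℝ≥0) : ℝ≥0∞) ^ 2 < ⊤ := by
  refine lt_of_eq_of_lt (lintegral_congr_ae ?_) (L2.lintegral_nnnorm_sq_lt_top (S f))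
  filter_upwards [hS f] with s hs
  rw [hs]

section Resolvent

variable {T : L2op} {K : ℝ → ℝ → ℂ} {kt kt' : ℝ → L2} {lam : ℂ}

theorem res_eq_one_add_smul_mul_res (hlam : lam ∈ regularSet T) :
    res T lam = 1 + lam • (T * res T lam) := by
  rw [← smul_mul_assoc]
  exact Ring.inverse_one_sub_eq_one_add_mul hlam

theorem adjoint_res_eq (hlam : lam ∈ regularSet T) :
    adjoint (res T lam) = 1 + starRingEnd ℂ lam • (adjoint T * adjoint (res T lam)) := by
  have h : res T lam = 1 + lam • (res T lam * T) := by
    rw [← mul_smul_comm]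
    exact Ring.inverse_one_sub_eq_one_add_inverse_mul hlam
  simp only [← star_eq_adjoint]
  conv_lhs => rw [h]
  rw [star_add, star_one, star_smul, star_mul]
  rfl

theorem coeFn_res_apply_ae (hK : IsK0Kernel K kt kt') (hT : IsInducedBy T K)
    (hlam : lam ∈ regularSet T) (t : ℝ) :
    (res T lam (kt' t) : ℝ → ℂ) =ᵐ[volume] fun x => resKer T K kt kt' lam x t := by
  have e : res T lam (kt' t) = kt' t + lam • T (res T lam (kt' t)) := by
    conv_lhs => rw [res_eq_one_add_smul_mul_res hlam]
    rfl
  rw [e]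
  filter_upwards [Lp.coeFn_add (kt' t) (lam • T (res T lam (kt' t))),
    Lp.coeFn_smul lam (T (res T lam (kt' t))), hK.repr_t' t, hT.coeFn_apply_ae hK _]
    with x hadd hsmul hkt hTx
  rw [hadd, Pi.add_apply, hsmul, Pi.smul_apply, hkt, hTx, resKer, smul_eq_mul, add_comm]

theorem coeFn_adjoint_res_apply_ae (hK : IsK0Kernel K kt kt') (hT : IsInducedBy T K)
    (hlam : lam ∈ regularSet T) (s : ℝ) :
    (adjoint (res T lam) (kt s) : ℝ → ℂ) =ᵐ[volume]
      fun x => starRingEnd ℂ (resKer T K kt kt' lam s x) := by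
  have e : adjoint (res T lam) (kt s)
      = kt s + starRingEnd ℂ lam • adjoint T (adjoint (res T lam) (kt s)) := by
    conv_lhs => rw [adjoint_res_eq hlam]
    rfl
  set v := adjoint (res T lam) (kt s)
  rw [e]
  filter_upwards [Lp.coeFn_add (kt s) (starRingEnd ℂ lam • adjoint T v),
    Lp.coeFn_smul (starRingEnd ℂ lam) (adjoint T v), hK.repr_t s,
    hT.coeFn_adjoint_apply_ae hK v] with x hadd hsmul hkt hTx
  rw [hadd, Pi.add_apply, hsmul, Pi.smul_apply, hkt, hTx, resKer, adjoint_inner_right,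
    ← inner_conj_symm, smul_eq_mul, map_add, map_mul, add_comm]

theorem isK0Kernel_resKer (hK : IsK0Kernel K kt kt') (hT : IsInducedBy T K)
    (hlam : lam ∈ regularSet T) :
    IsK0Kernel (resKer T K kt kt' lam) (fun s => adjoint (res T lam) (kt s))
      (fun t => res T lam (kt' t)) where
  repr_t := coeFn_adjoint_res_apply_ae hK hT hlam
  repr_t' := coeFn_res_apply_ae hK hT hlam
  cont := (continuous_const.mul ((hK.cont_t.comp continuous_fst).inner
    ((res T lam).continuous.comp (hK.cont_t'.comp continuous_snd)))).add hK.cont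
  vanish := by
    have h := ((tendsto_inner_cocompact_prod hK.cont_t hK.vanish_t
      ((res T lam).continuous.comp hK.cont_t')
      (((res T lam).continuous.tendsto' 0 0 (map_zero _)).comp hK.vanish_t')).const_mul lam).add
      hK.vanish
    rw [mul_zero, zero_add] at h
    exact h
  cont_t := (adjoint (res T lam)).continuous.comp hK.cont_t
  vanish_t := ((adjoint (res T lam)).continuous.tendsto' 0 0 (map_zero _)).comp hK.vanish_t
  cont_t' := (res T lam).continuous.comp hK.cont_t'
  vanish_t' := ((res T lam).continuous.tendsto' 0 0 (map_zero _)).comp hK.vanish_t'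

theorem integral_mul_resKer (hK : IsK0Kernel K kt kt') (hT : IsInducedBy T K)
    (hlam : lam ∈ regularSet T) (s t : ℝ) :
    ∫ x, K s x * resKer T K kt kt' lam x t = ⟪kt s, res T lam (kt' t)⟫_ℂ :=
  integral_mul_eq_inner (hK.repr_t s) (coeFn_res_apply_ae hK hT hlam t)

theorem integral_resKer_mul (hK : IsK0Kernel K kt kt') (hT : IsInducedBy T K)
    (hlam : lam ∈ regularSet T) (s t : ℝ) :
    ∫ x, resKer T K kt kt' lam s x * K x t = ⟪kt s, res T lam (kt' t)⟫_ℂ := by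
  rw [integral_mul_eq_inner (coeFn_adjoint_res_apply_ae hK hT hlam s) (hK.repr_t' t),
    adjoint_inner_left]

theorem isInducedBy_fres_resKer (hK : IsK0Kernel K kt kt') (hT : IsInducedBy T K)
    (hlam : lam ∈ regularSet T) : IsInducedBy (fres T lam) (resKer T K kt kt' lam) := by
  intro f
  filter_upwards [hT.coeFn_apply_ae hK (res T lam f)] with s hs
  rw [integral_mul_eq_inner (coeFn_adjoint_res_apply_ae hK hT hlam s) EventuallyEq.rfl,
    adjoint_inner_left]
  exact hs

end Resolvent

theorem statement0 (T : L2op) (K : ℝ → ℝ → ℂ) (kt kt' : ℝ → L2)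
    (hK : IsK0Kernel K kt kt') (hT : IsInducedBy T K)
    (lam : ℂ) (hlam : lam ∈ regularSet T) :
    ∃ R : ℝ → ℝ → ℂ, IsResolventKernel K lam R ∧ IsInducedBy (fres T lam) R := by
  have hind := isInducedBy_fres_resKer hK hT hlam
  refine ⟨resKer T K kt kt' lam,
    ⟨⟨_, _, isK0Kernel_resKer hK hT hlam⟩, fun s t => ?_, fun s t => ?_,
      hind.lintegral_sq_lt_top⟩, hind⟩
  · rw [integral_mul_resKer hK hT hlam, resKer]; ring
  · rw [integral_resKer_mul hK hT hlam, resKer]; ring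
end
end

section
/- Let T be a bounded linear operator on L² which is an integral operator induced by a kernel 𝐓 that is a K⁰-kernel, and let λ ∈ ℂ. If a resolvent kernel 𝐓_{|λ} for 𝐓 at λ exists, then λ is a regular value for T. -/
open MeasureTheory Filter Topology ContinuousLinearMap
open scoped ENNReal NNReal

noncomputable section

/-!
The Carleman function `𝐫` of the resolvent kernel defines the operator `A f = (s ↦ ⟨f, 𝐫(s)⟩)`,
which maps `L²` into `L²` by the square-integrability condition and is therefore bounded by the
closed graph theorem; it is induced by `𝐓_{|λ}`. On the dense subspace of integrable functions,
Fubini's theorem turns the two resolvent equations into `A - λTA = T` and `A - λAT = T`, so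
`I + λA` is a two-sided inverse of `I - λT`.
-/

open ComplexConjugate
open scoped InnerProductSpace

theorem isUnit_one_sub_smul_of_sub_smul_mul_eq {𝕜 A : Type*} [CommRing 𝕜] [Ring A] [Algebra 𝕜 A]
    {c : 𝕜} {t a : A} (h₁ : a - c • (t * a) = t) (h₂ : a - c • (a * t) = t) :
    IsUnit (1 - c • t) := by
  refine ⟨⟨1 - c • t, 1 + c • a, ?_, ?_⟩, rfl⟩
  · simp only [mul_add, sub_mul, one_mul, mul_one, smul_mul_assoc, mul_smul_comm]
    linear_combination (norm := module) c • h₁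
  · simp only [mul_sub, add_mul, one_mul, mul_one, smul_mul_assoc, mul_smul_comm]
    linear_combination (norm := module) c • h₂

theorem exists_norm_le_of_tendsto_cocompact {X E : Type*} [TopologicalSpace X]
    [SeminormedAddCommGroup E] {v : X → E} (hc : Continuous v)
    (hv : Tendsto v (cocompact X) (𝓝 0)) : ∃ C, ∀ x, ‖v x‖ ≤ C :=
  let F : ZeroAtInftyContinuousMap X E := ⟨⟨v, hc⟩, hv⟩
  ⟨‖F.toBCF‖, F.toBCF.norm_coe_le_norm⟩

section MeasureTheory

variable {α : Type*} [MeasurableSpace α] {μ : Measure α}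

theorem ContinuousLinearMap.ext_integrable {𝕜 E F : Type*} [NormedField 𝕜]
    [NormedAddCommGroup E] [NormedSpace 𝕜 E] [TopologicalSpace F] [AddCommGroup F]
    [Module 𝕜 F] [T2Space F] {p : ℝ≥0∞} [Fact (1 ≤ p)] (hp : p ≠ ∞)
    {B C : Lp E p μ →L[𝕜] F} (h : ∀ f : Lp E p μ, Integrable f μ → B f = C f) : B = C := by
  ext f
  induction f using Lp.induction hp with
  | indicatorConst c hs hμs =>
    exact h _ (integrable_indicatorConstLp hs hμs.ne c)
  | add hf hg _ hBf hBg => rw [map_add, map_add, hBf, hBg]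
  | isClosed => exact isClosed_eq B.continuous C.continuous

theorem memLp_two_of_lintegral_nnnorm_sq_lt_top {E : Type*} [NormedAddCommGroup E] {g : α → E} (hg : AEStronglyMeasurable g μ)
    (h : ∫⁻ x, (‖g x‖₊ : ℝ≥0∞) ^ 2 ∂μ < ∞) : MemLp g 2 μ :=
  ⟨hg, (eLpNorm_lt_top_iff_lintegral_rpow_enorm_lt_top two_ne_zero ENNReal.ofNat_ne_top).2
    (by simpa [enorm_eq_nnnorm] using h)⟩

theorem integral_norm_mul_norm_le {E : Type*} [NormedAddCommGroup E] (u v : Lp E 2 μ) :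
    ∫ x, ‖u x‖ * ‖v x‖ ∂μ ≤ ‖u‖ * ‖v‖ := by
  let U : Lp ℝ 2 μ := (Lp.memLp u).norm.toLp _
  let V : Lp ℝ 2 μ := (Lp.memLp v).norm.toLp _
  have hnorm {w : Lp E 2 μ} : ‖(Lp.memLp w).norm.toLp _‖ = ‖w‖ := by
    rw [Lp.norm_toLp, eLpNorm_norm, Lp.norm_def]
  have hU : (U : α → ℝ) =ᵐ[μ] fun x => ‖u x‖ := MemLp.coeFn_toLp _
  have hV : (V : α → ℝ) =ᵐ[μ] fun x => ‖v x‖ := MemLp.coeFn_toLp _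
  have hUV : ∫ x, ‖u x‖ * ‖v x‖ ∂μ = ⟪U, V⟫_ℝ := by
    rw [L2.inner_def]
    refine integral_congr_ae ?_
    filter_upwards [hU, hV] with x hu hv
    simp [hu, hv, mul_comm]
  rw [hUV, ← hnorm (w := u), ← hnorm (w := v)]
  exact real_inner_le_norm U V

variable {𝕜 : Type*} [RCLike 𝕜] {w : Lp 𝕜 2 μ} {W : α → 𝕜}

theorem L2.inner_eq_integral_mul (hw : (w : α → 𝕜) =ᵐ[μ] fun x => conj (W x)) (f : Lp 𝕜 2 μ) :
    ⟪w, f⟫_𝕜 = ∫ x, W x * f x ∂μ := by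
  rw [L2.inner_def]
  refine integral_congr_ae ?_
  filter_upwards [hw] with x hx
  simp [hx, mul_comm]

theorem L2.integrable_mul (hw : (w : α → 𝕜) =ᵐ[μ] fun x => conj (W x)) (f : Lp 𝕜 2 μ) :
    Integrable (fun x => W x * f x) μ := by
  refine (L2.integrable_inner (𝕜 := 𝕜) w f).congr ?_
  filter_upwards [hw] with x hx
  simp [hx, mul_comm]

end MeasureTheory

section Carleman

variable {α : Type*} [MeasurableSpace α] {μ : Measure α}
  {𝕜 E : Type*} [RCLike 𝕜] [NormedAddCommGroup E] [InnerProductSpace 𝕜 E]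
  {p : ℝ≥0∞} (r : α → E) (hr : ∀ f, MemLp (fun s => ⟪r s, f⟫_𝕜) p μ)

def carlemanLinearMap : E →ₗ[𝕜] Lp 𝕜 p μ where
  toFun f := (hr f).toLp
  map_add' f g := by
    simp only [inner_add_right]
    exact MemLp.toLp_add (hr f) (hr g)
  map_smul' c f := by
    simp only [inner_smul_right]
    exact MemLp.toLp_const_smul c (hr f)

theorem coeFn_carlemanLinearMap (f : E) :
    (carlemanLinearMap r hr f : α → 𝕜) =ᵐ[μ] fun s => ⟪r s, f⟫_𝕜 :=
  MemLp.coeFn_toLp (hr f)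

/-- An `Lᵖ` limit has an a.e. convergent subsequence, and pointwise `⟪r s, uₙ⟫ → ⟪r s, x⟫`,
so the graph is closed. -/
theorem continuous_carlemanLinearMap [Fact (1 ≤ p)] [CompleteSpace E] :
    Continuous (carlemanLinearMap r hr) := by
  refine (carlemanLinearMap r hr).continuous_of_seq_closed_graph fun u x y hux huy => Lp.ext ?_
  obtain ⟨ns, hns, hae⟩ := (tendstoInMeasure_of_tendsto_Lp huy).exists_seq_tendsto_ae
  have hcoe : ∀ᵐ s ∂μ, ∀ i, (carlemanLinearMap r hr (u (ns i)) : α → 𝕜) s = ⟪r s, u (ns i)⟫_𝕜 :=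
    ae_all_iff.2 fun i => coeFn_carlemanLinearMap r hr _
  filter_upwards [hae, hcoe, coeFn_carlemanLinearMap r hr x] with s hys hus hxs
  rw [hxs]
  refine tendsto_nhds_unique (hys.congr fun i => hus i) ?_
  exact tendsto_const_nhds.inner (hux.comp hns.tendsto_atTop)

def carlemanOperator [Fact (1 ≤ p)] [CompleteSpace E] : E →L[𝕜] Lp 𝕜 p μ :=
  ⟨carlemanLinearMap r hr, continuous_carlemanLinearMap r hr⟩

theorem coeFn_carlemanOperator [Fact (1 ≤ p)] [CompleteSpace E] (f : E) :
    (carlemanOperator r hr f : α → 𝕜) =ᵐ[μ] fun s => ⟪r s, f⟫_𝕜 :=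
  coeFn_carlemanLinearMap r hr f

end Carleman

theorem integral_conj_mul_integral_kernel_comm (u : L2) {f : ℝ → ℂ} (hf : Integrable f)
    {M : ℝ → ℝ → ℂ} (hM : Continuous fun p : ℝ × ℝ => M p.1 p.2) {m : ℝ → L2}
    (hm : ∀ t, (m t : ℝ → ℂ) =ᵐ[volume] fun x => M x t) {C : ℝ} (hC : ∀ t, ‖m t‖ ≤ C) :
    ∫ x, conj (u x) * ∫ t, M x t * f t = ∫ t, (∫ x, conj (u x) * M x t) * f t := by
  let G : ℝ × ℝ → ℂ := fun p => conj (u p.1) * M p.1 p.2 * f p.2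
  have hGm : AEStronglyMeasurable G (volume.prod volume) :=
    ((Complex.continuous_conj.comp_aestronglyMeasurable (Lp.aestronglyMeasurable u)).comp_fst.mul
      hM.aestronglyMeasurable).mul hf.aestronglyMeasurable.comp_snd
  have hslice (t : ℝ) : Integrable (fun x => conj (u x) * M x t) := by
    have hu : (u : ℝ → ℂ) =ᵐ[volume] fun x => conj (conj (u x)) :=
      Eventually.of_forall fun x => (Complex.conj_conj (u x)).symm
    refine (L2.integrable_mul hu (m t)).congr ?_
    filter_upwards [hm t] with x hx
    rw [hx]
  have hslice_norm (t : ℝ) : ∫ x, ‖conj (u x) * M x t‖ ≤ ‖u‖ * C := by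
    calc ∫ x, ‖conj (u x) * M x t‖ = ∫ x, ‖u x‖ * ‖m t x‖ := by
          refine integral_congr_ae ?_
          filter_upwards [hm t] with x hx
          simp [hx]
      _ ≤ ‖u‖ * ‖m t‖ := integral_norm_mul_norm_le u (m t)
      _ ≤ ‖u‖ * C := by gcongr; exact hC t
  have hG : Integrable G (volume.prod volume) := by
    refine (integrable_prod_iff' hGm).2
      ⟨Eventually.of_forall fun t => (hslice t).mul_const (f t), ?_⟩
    refine (hf.norm.const_mul (‖u‖ * C)).mono' hGm.prod_swap.norm.integral_prod_right'
      (Eventually.of_forall fun t => ?_)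
    simp only [G, norm_mul (_ * _) (f t), integral_mul_const]
    rw [Real.norm_of_nonneg (by positivity)]
    gcongr
    simpa only [norm_mul] using hslice_norm t
  calc ∫ x, conj (u x) * ∫ t, M x t * f t = ∫ x, ∫ t, G (x, t) := by
        simp only [G, mul_assoc, integral_const_mul]
    _ = ∫ t, ∫ x, G (x, t) := integral_integral_swap hG
    _ = ∫ t, (∫ x, conj (u x) * M x t) * f t := by simp only [G, integral_mul_const]

section Kernel

variable {K L M N : ℝ → ℝ → ℂ} {kt kt' lt lt' mt mt' nt nt' : ℝ → L2}

theorem IsInducedBy.mul_ae_eq {S U : L2op} (hS : IsInducedBy S L) (hU : IsInducedBy U M)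
    (hL : IsK0Kernel L lt lt') (hM : IsK0Kernel M mt mt') {f : L2} (hf : Integrable f) :
    ((S * U) f : ℝ → ℂ) =ᵐ[volume] fun s => ∫ t, (∫ x, L s x * M x t) * f t := by
  obtain ⟨C, hC⟩ := exists_norm_le_of_tendsto_cocompact hM.cont_t' hM.vanish_t'
  filter_upwards [hS (U f)] with s hs
  have hconj : ∀ᵐ x, conj (lt s x) = L s x := by
    filter_upwards [hL.repr_t s] with x hx
    simp [hx]
  calc ((S * U) f : ℝ → ℂ) s = ∫ x, L s x * U f x := hs
    _ = ∫ x, conj (lt s x) * ∫ t, M x t * f t := by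
        refine integral_congr_ae ?_
        filter_upwards [hU f, hconj] with x hUx hx
        rw [hUx, hx]
    _ = ∫ t, (∫ x, conj (lt s x) * M x t) * f t :=
        integral_conj_mul_integral_kernel_comm (lt s) hf hM.cont hM.repr_t' hC
    _ = ∫ t, (∫ x, L s x * M x t) * f t := by
        refine integral_congr_ae (Eventually.of_forall fun t => congrArg (· * f t) ?_)
        exact integral_congr_ae (hconj.mono fun x hx => congrArg (· * M x t) hx)

theorem IsInducedBy.sub_smul_mul_eq {V W S U : L2op} (hV : IsInducedBy V N)
    (hW : IsInducedBy W K) (hS : IsInducedBy S L) (hU : IsInducedBy U M)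
    (hN : IsK0Kernel N nt nt') (hK : IsK0Kernel K kt kt') (hL : IsK0Kernel L lt lt')
    (hM : IsK0Kernel M mt mt') {lam : ℂ}
    (h : ∀ s t, N s t - lam * ∫ x, L s x * M x t = K s t) :
    V - lam • (S * U) = W := by
  refine ContinuousLinearMap.ext_integrable ENNReal.ofNat_ne_top fun f hf => Lp.ext ?_
  filter_upwards [Lp.coeFn_sub (V f) (lam • (S * U) f), Lp.coeFn_smul lam ((S * U) f), hV f,
    hW f, hS.mul_ae_eq hU hL hM hf] with s hsub hsmul hVs hWs hSUs
  rw [sub_apply, smul_apply, hsub, Pi.sub_apply, hsmul, Pi.smul_apply, hVs, hWs, hSUs,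
    smul_eq_mul, ← integral_const_mul]
  calc (∫ t, N s t * f t) - ∫ t, lam * ((∫ x, L s x * M x t) * f t)
      = (∫ t, N s t * f t) - ∫ t, (N s t * f t - K s t * f t) := by
        congr 1
        refine integral_congr_ae (Eventually.of_forall fun t => ?_)
        linear_combination -(f t : ℂ) * h s t
    _ = ∫ t, K s t * f t := by
        rw [integral_sub (L2.integrable_mul (hN.repr_t s) f) (L2.integrable_mul (hK.repr_t s) f)]
        ring

end Kernel

theorem statement1 (T : L2op) (K : ℝ → ℝ → ℂ) (kt kt' : ℝ → L2)
    (hK : IsK0Kernel K kt kt') (hT : IsInducedBy T K)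
    (lam : ℂ) (R : ℝ → ℝ → ℂ) (hR : IsResolventKernel K lam R) :
    lam ∈ regularSet T := by
  obtain ⟨⟨rt, rt', hRK⟩, hKR, hRK', hsq⟩ := hR
  have hrow (s : ℝ) (f : L2) : ⟪rt s, f⟫_ℂ = ∫ t, R s t * f t :=
    L2.inner_eq_integral_mul (hRK.repr_t s) f
  have hmem (f : L2) : MemLp (fun s => ⟪rt s, f⟫_ℂ) 2 volume :=
    memLp_two_of_lintegral_nnnorm_sq_lt_top
      (hRK.cont_t.inner continuous_const).aestronglyMeasurable (by simpa only [hrow] using hsq f)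
  let A : L2op := carlemanOperator rt hmem
  have hA : IsInducedBy A R := fun f => (coeFn_carlemanOperator rt hmem f).trans
    (Eventually.of_forall fun s => hrow s f)
  exact isUnit_one_sub_smul_of_sub_smul_mul_eq
    (hA.sub_smul_mul_eq hT hT hA hRK hK hK hRK hKR)
    (hA.sub_smul_mul_eq hT hA hT hRK hK hRK hK hRK')
end
end

section
/- Let T be a bounded linear operator on L² induced by a K⁰-kernel 𝐓 satisfying condition (iv), with subordinate operators Tₙ = PₙT and T̃ₙ = PₙTPₙ, and let {βₙ} be any sequence of complex numbers with βₙ → 0. Then ∅ ≠ ∇_s({βₙI + Tₙ}) ⊆ ∇_s({βₙI + T̃ₙ}) ⊆ Π(T). -/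
open MeasureTheory Filter Topology ContinuousLinearMap
open scoped ENNReal NNReal

noncomputable section

/-!
Both `βₙI + PₙT` and `βₙI + PₙTPₙ` converge strongly to `T`, because `Pₙ → I` strongly
(dominated convergence) and `βₙ → 0`; by Banach–Steinhaus they are uniformly bounded.
For small `|ζ|` a Neumann series makes their resolvents uniformly bounded, and uniformly bounded
inverses of a strongly convergent family converge strongly to the inverse of the invertible limit;
so `∇_s` is nonempty. Conversely, if the resolvents `(I - ζSₙ)⁻¹` converge strongly, their limit is
a bounded operator, and passing to the limit in `(I - ζSₙ)R = R(I - ζSₙ) = I` shows that it inverts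
`I - ζT`. Finally `Pₙ(PₙT) = PₙT` makes `I - ζ(βₙI + PₙT)` block upper triangular with respect
to `Pₙ`, which yields `S̃_{n|ζ} = S_{n|ζ} Pₙ + βₙ(1 - ζβₙ)⁻¹ (I - Pₙ)` and the middle inclusion.
-/

namespace ContinuousLinearMap

variable {𝕜 E F : Type*} [NontriviallyNormedField 𝕜]
  [NormedAddCommGroup E] [NormedSpace 𝕜 E] [NormedAddCommGroup F] [NormedSpace 𝕜 F]

theorem tendsto_apply_of_tendsto_of_eventually_norm_le {ι : Type*} {l : Filter ι}
    {A : ι → E →L[𝕜] F} {C : ℝ} {u : ι → E} {v : E} {w : F}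
    (hC : ∀ᶠ n in l, ‖A n‖ ≤ C) (hA : Tendsto (fun n => A n v) l (𝓝 w))
    (hu : Tendsto u l (𝓝 v)) :
    Tendsto (fun n => A n (u n)) l (𝓝 w) := by
  have hsmall : Tendsto (fun n => A n (u n - v)) l (𝓝 0) := by
    refine squeeze_zero_norm' ?_
      (by simpa using (tendsto_iff_norm_sub_tendsto_zero.mp hu).const_mul C)
    filter_upwards [hC] with n hn
    exact (A n).le_opNorm _ |>.trans (mul_le_mul_of_nonneg_right hn (norm_nonneg _))
  simpa using hA.add hsmall

theorem tendsto_apply_of_mul_eq_one {ι : Type*} {l : Filter ι} {X Y : ι → E →L[𝕜] E}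
    {X₀ Y₀ : E →L[𝕜] E} {C : ℝ} (hX : ∀ x, Tendsto (fun n => X n x) l (𝓝 (X₀ x)))
    (hY : ∀ᶠ n in l, ‖Y n‖ ≤ C) (hYX : ∀ᶠ n in l, Y n * X n = 1) (h : X₀ * Y₀ = 1) (x : E) :
    Tendsto (fun n => Y n x) l (𝓝 (Y₀ x)) := by
  have hY₀x : X₀ (Y₀ x) = x := by rw [← mul_apply_eq_comp, h, one_apply_eq_self]
  have hdiff : Tendsto (fun n => Y n (x - X n (Y₀ x))) l (𝓝 0) :=
    tendsto_apply_of_tendsto_of_eventually_norm_le (v := 0) hY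
      (by simpa only [map_zero] using tendsto_const_nhds)
      (by simpa [hY₀x] using (tendsto_const_nhds (x := x)).sub (hX (Y₀ x)))
  simpa using (hdiff.const_add (Y₀ x)).congr' <| hYX.mono fun n hn => by
    rw [map_sub, ← mul_apply_eq_comp (Y n), hn, one_apply_eq_self, add_sub_cancel]

variable [CompleteSpace E]

theorem exists_norm_le_of_forall_exists_tendsto {A : ℕ → E →L[𝕜] F}
    (h : ∀ x, ∃ y, Tendsto (fun n => A n x) atTop (𝓝 y)) : ∃ C, ∀ n, ‖A n‖ ≤ C :=
  banach_steinhaus fun x => by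
    obtain ⟨y, hy⟩ := h x
    obtain ⟨C, hC⟩ := isBounded_iff_forall_norm_le.mp (Metric.isBounded_range_of_tendsto _ hy)
    exact ⟨C, fun n => hC _ (Set.mem_range_self n)⟩

variable {A B : ℕ → E →L[𝕜] E} {A₀ B₀ : E →L[𝕜] E}

theorem tendsto_mul_apply (hA : ∀ x, Tendsto (fun n => A n x) atTop (𝓝 (A₀ x)))
    (hB : ∀ x, Tendsto (fun n => B n x) atTop (𝓝 (B₀ x))) (x : E) :
    Tendsto (fun n => (A n * B n) x) atTop (𝓝 ((A₀ * B₀) x)) := by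
  obtain ⟨C, hC⟩ := exists_norm_le_of_forall_exists_tendsto fun x => ⟨_, hA x⟩
  exact tendsto_apply_of_tendsto_of_eventually_norm_le (A := A) (.of_forall hC) (hA _) (hB x)

theorem mul_eq_one_of_tendsto (hA : ∀ x, Tendsto (fun n => A n x) atTop (𝓝 (A₀ x)))
    (hB : ∀ x, Tendsto (fun n => B n x) atTop (𝓝 (B₀ x)))
    (h : ∀ᶠ n in atTop, A n * B n = 1) : A₀ * B₀ = 1 :=
  ext fun x => tendsto_nhds_unique (tendsto_mul_apply hA hB x)
    (tendsto_const_nhds.congr' (h.mono fun n hn => by simp only [hn]))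

end ContinuousLinearMap

/-- `p * B = B` makes `c • 1 - B` upper triangular with respect to the idempotent `p`, with lower
diagonal block `c • (1 - p)`; cutting off its upper right block `B * (1 - p)` keeps it invertible. -/
theorem mul_compress_eq_one {𝕜 A : Type*} [Field 𝕜] [Ring A] [Algebra 𝕜 A] {p B r : A} {c : 𝕜}
    (hc : c ≠ 0) (hp : p * p = p) (hpB : p * B = B)
    (h₁ : (c • 1 - B) * r = 1) (h₂ : r * (c • 1 - B) = 1) :
    (c • 1 - B * p) * (r * p + c⁻¹ • (1 - p)) = 1 ∧
      (r * p + c⁻¹ • (1 - p)) * (c • 1 - B * p) = 1 := by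
  have hBr : B * r = c • r - 1 := by
    rw [sub_mul, smul_one_mul] at h₁; rw [← h₁]; abel
  have hrB : r * B = c • r - 1 := by
    rw [mul_sub, mul_smul_one] at h₂; rw [← h₂]; abel
  have hqB : (1 - p) * B = 0 := by rw [sub_mul, one_mul, hpB, sub_self]
  have hqr : (1 - p) * r = c⁻¹ • (1 - p) := by
    have : (1 - p) * (c • 1 - B) * r = 1 - p := by rw [mul_assoc, h₁, mul_one]
    rw [mul_sub, hqB, sub_zero, mul_smul_one, smul_mul_assoc] at this
    exact ((inv_smul_eq_iff₀ hc).mpr this.symm).symm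
  have hprp : p * r * p = r * p := by
    have : (1 - p) * r * p = 0 := by
      rw [hqr, smul_mul_assoc, sub_mul, one_mul, hp, sub_self, smul_zero]
    rwa [sub_mul, sub_mul, one_mul, sub_eq_zero, eq_comm] at this
  have hpq : p * (1 - p) = 0 := by rw [mul_sub, mul_one, hp, sub_self]
  constructor
  · have e₁ : (c • 1 - B * p) * (r * p) = p := by
      rw [sub_mul, mul_assoc B, ← mul_assoc p, hprp, ← mul_assoc B, hBr]
      simp only [sub_mul, smul_mul_assoc, one_mul]; abel
    have e₂ : (c • 1 - B * p) * (c⁻¹ • (1 - p)) = 1 - p := by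
      rw [mul_smul_comm, sub_mul, mul_assoc B, hpq, mul_zero, sub_zero, smul_mul_assoc, one_mul,
        inv_smul_smul₀ hc]
    rw [mul_add, e₁, e₂, add_sub_cancel]
  · have e₁ : r * p * (c • 1 - B * p) = p := by
      rw [mul_sub, mul_smul_one, ← mul_assoc, mul_assoc r p B, hpB, hrB]
      simp only [sub_mul, smul_mul_assoc, one_mul]; abel
    have e₂ : c⁻¹ • (1 - p) * (c • 1 - B * p) = 1 - p := by
      rw [smul_mul_assoc, mul_sub, mul_smul_one, ← mul_assoc, hqB, zero_mul, sub_zero,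
        inv_smul_smul₀ hc]
    rw [add_mul, e₁, e₂, add_sub_cancel]

theorem tendsto_eLpNorm_mul_of_tendsto_zero {α R : Type*} [MeasurableSpace α] {μ : Measure α}
    [NormedRing R] {p : ℝ≥0∞} (hp₀ : p ≠ 0) (hp : p ≠ ∞) {g : ℕ → α → R} {f : α → R}
    (hg : ∀ n, AEStronglyMeasurable (g n) μ) (hg₁ : ∀ n x, ‖g n x‖ ≤ 1)
    (hg₀ : ∀ x, Tendsto (fun n => g n x) atTop (𝓝 0)) (hf : MemLp f p μ) :
    Tendsto (fun n => eLpNorm (fun x => g n x * f x) p μ) atTop (𝓝 0) := by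
  have hp' : 0 < p.toReal := ENNReal.toReal_pos hp₀ hp
  have hint : Tendsto (fun n => ∫⁻ x, ‖g n x * f x‖ₑ ^ p.toReal ∂μ) atTop (𝓝 0) := by
    simpa [ENNReal.zero_rpow_of_pos hp'] using
      tendsto_lintegral_of_dominated_convergence' (F := fun n x => ‖g n x * f x‖ₑ ^ p.toReal)
        (f := fun _ => 0) (fun x => ‖f x‖ₑ ^ p.toReal)
        (fun n => ((hg n).mul hf.1).enorm.pow_const _)
        (fun n => .of_forall fun x => ENNReal.rpow_le_rpow (enorm_le_iff_norm_le.2 <|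
          (norm_mul_le _ _).trans (mul_le_of_le_one_left (norm_nonneg _) (hg₁ n x))) hp'.le)
        (lintegral_rpow_enorm_lt_top_of_eLpNorm_lt_top hp₀ hp hf.2).ne
        (.of_forall fun x => by
          simpa [ENNReal.zero_rpow_of_pos hp'] using
            ((hg₀ x).mul_const (f x)).enorm.ennrpow_const p.toReal)
  simp_rw [eLpNorm_eq_lintegral_rpow_enorm_toReal hp₀ hp]
  simpa [Function.comp_def, ENNReal.zero_rpow_of_pos (inv_pos.2 hp')] using
    (ENNReal.continuous_rpow_const (y := p.toReal⁻¹)).tendsto 0 |>.comp hint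

section Truncation

theorem chi_mul_self (t x : ℝ) : chi t x * chi t x = chi t x := by
  by_cases h : x ∈ Set.Ioo (-t) t <;> simp [chi, h]

theorem norm_chi_sub_one_le (t x : ℝ) : ‖chi t x - 1‖ ≤ 1 := by
  by_cases h : x ∈ Set.Ioo (-t) t <;> simp [chi, h]

theorem chi_eq_one_of_abs_lt {t x : ℝ} (h : |x| < t) : chi t x = 1 := by
  rw [chi, Set.indicator_of_mem (Set.mem_Ioo.2 (abs_lt.1 h)), Pi.one_apply]

theorem measurable_chi (t : ℝ) : Measurable (chi t) :=
  measurable_const.indicator measurableSet_Ioo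

variable {t : ℝ} {Q : L2op}

theorem mul_self_eq_of_coeFn_ae_eq_chi_mul
    (hQ : ∀ f : L2, (Q f : ℝ → ℂ) =ᵐ[volume] fun x => chi t x * f x) : Q * Q = Q := by
  ext1 f
  rw [mul_apply_eq_comp]
  refine Lp.ext ?_
  filter_upwards [hQ (Q f), hQ f] with x h₁ h₂
  rw [h₁, h₂, ← mul_assoc, chi_mul_self]

theorem tendsto_apply_of_coeFn_ae_eq_chi_mul {P : ℕ → L2op} {τ : ℕ → ℝ}
    (hτ : Tendsto τ atTop atTop)
    (hP : ∀ n, ∀ f : L2, (P n f : ℝ → ℂ) =ᵐ[volume] fun x => chi (τ n) x * f x) (f : L2) :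
    Tendsto (fun n => P n f) atTop (𝓝 f) := by
  rw [Lp.tendsto_Lp_iff_tendsto_eLpNorm']
  have hdiff (n : ℕ) : ⇑(P n f) - ⇑f =ᵐ[volume] fun x => (chi (τ n) x - 1) * f x := by
    filter_upwards [hP n f] with x hx
    rw [Pi.sub_apply, hx, sub_one_mul]
  simp_rw [eLpNorm_congr_ae (hdiff _)]
  refine tendsto_eLpNorm_mul_of_tendsto_zero two_ne_zero ENNReal.ofNat_ne_top
    (fun n => ((measurable_chi _).sub_const 1).aestronglyMeasurable)
    (fun n x => norm_chi_sub_one_le _ x) (fun x => tendsto_const_nhds.congr' ?_) (Lp.memLp f)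
  filter_upwards [hτ.eventually_gt_atTop |x|] with n hn
  rw [chi_eq_one_of_abs_lt hn, sub_self]

end Truncation

section Resolvent

variable {S : L2op} {ζ : ℂ}

theorem mem_regularSet_and_res_eq {R : L2op} (h₁ : (1 - ζ • S) * R = 1)
    (h₂ : R * (1 - ζ • S) = 1) : ζ ∈ regularSet S ∧ res S ζ = R :=
  ⟨⟨⟨_, R, h₁, h₂⟩, rfl⟩, Ring.inverse_unit ⟨_, R, h₁, h₂⟩⟩

theorem one_sub_smul_mul_res (h : ζ ∈ regularSet S) : (1 - ζ • S) * res S ζ = 1 :=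
  Ring.mul_inverse_cancel _ h

theorem res_mul_one_sub_smul (h : ζ ∈ regularSet S) : res S ζ * (1 - ζ • S) = 1 :=
  Ring.inverse_mul_cancel _ h

theorem res_eq_one_add_smul_fres (h : ζ ∈ regularSet S) : res S ζ = 1 + ζ • fres S ζ := by
  have h₁ := one_sub_smul_mul_res h
  rw [sub_mul, one_mul, smul_mul_assoc] at h₁
  rw [fres, ← h₁, sub_add_cancel]

theorem fres_eq_inv_smul_res_sub_one (hζ : ζ ≠ 0) (h : ζ ∈ regularSet S) :
    fres S ζ = ζ⁻¹ • (res S ζ - 1) := by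
  rw [res_eq_one_add_smul_fres h, add_sub_cancel_left, inv_smul_smul₀ hζ]

theorem mem_regularSet_and_norm_res_le_two (h : ‖ζ • S‖ ≤ 1 / 2) :
    ζ ∈ regularSet S ∧ ‖res S ζ‖ ≤ 2 := by
  have hreg : ζ ∈ regularSet S := (Units.oneSub _ (h.trans_lt (by norm_num))).isUnit
  refine ⟨hreg, ?_⟩
  have hfix : res S ζ = 1 + res S ζ * (ζ • S) := by
    simpa [mul_sub, sub_eq_iff_eq_add, add_comm] using res_mul_one_sub_smul hreg
  have : ‖res S ζ‖ ≤ 1 + ‖res S ζ‖ * (1 / 2) :=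
    calc ‖res S ζ‖ ≤ ‖(1 : L2op)‖ + ‖res S ζ * (ζ • S)‖ :=
          (congrArg norm hfix).trans_le (norm_add_le _ _)
      _ ≤ 1 + ‖res S ζ‖ * (1 / 2) :=
        add_le_add norm_id_le ((norm_mul_le _ _).trans (by gcongr))
  linarith

theorem mem_regularSet_and_fres_add_mul_eq {A P : L2op} {β : ℂ} (hζ : ζ ≠ 0)
    (hβ : 1 - ζ * β ≠ 0) (hP : P * P = P) (hPA : P * A = A) (h : ζ ∈ regularSet (β • 1 + A)) :
    ζ ∈ regularSet (β • 1 + A * P) ∧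
      fres (β • 1 + A * P) ζ = fres (β • 1 + A) ζ * P + (β * (1 - ζ * β)⁻¹) • (1 - P) := by
  have hX (B : L2op) : 1 - ζ • (β • 1 + B) = (1 - ζ * β) • 1 - ζ • B := by
    rw [smul_add, smul_smul, sub_smul, one_smul]; abel
  obtain ⟨h₁, h₂⟩ := mul_compress_eq_one hβ hP (B := ζ • A) (by rw [mul_smul_comm, hPA])
    (hX A ▸ one_sub_smul_mul_res h) (hX A ▸ res_mul_one_sub_smul h)
  rw [smul_mul_assoc, ← hX] at h₁ h₂
  obtain ⟨hreg, hres⟩ := mem_regularSet_and_res_eq h₁ h₂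
  refine ⟨hreg, ?_⟩
  have hscalar : ζ⁻¹ * ((1 - ζ * β)⁻¹ - 1) = β * (1 - ζ * β)⁻¹ := by field_simp; ring
  rw [fres_eq_inv_smul_res_sub_one hζ hreg, hres, fres_eq_inv_smul_res_sub_one hζ h,
    smul_mul_assoc, sub_mul, one_mul]
  linear_combination (norm := module) hscalar • (1 - P)

end Resolvent

theorem mem_nablaB_of_eventually {S : ℕ → L2op} {ζ : ℂ} {M : ℝ} (hζ : ζ ≠ 0) (hM : 0 < M)
    (h : ∀ᶠ n in atTop, ζ ∈ regularSet (S n) ∧ ‖fres (S n) ζ‖ ≤ M) : ζ ∈ nablaB S := by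
  obtain ⟨N, hN⟩ := eventually_atTop.1 h
  exact ⟨hζ, M, hM, N, fun n hn => hN n hn.le⟩

section StrongLimit

variable {S : ℕ → L2op} {T : L2op}

theorem tendsto_one_sub_smul_apply (hS : ∀ f, Tendsto (fun n => S n f) atTop (𝓝 (T f)))
    (ζ : ℂ) (f : L2) : Tendsto (fun n => (1 - ζ • S n) f) atTop (𝓝 ((1 - ζ • T) f)) := by
  simpa using tendsto_const_nhds.sub ((hS f).const_smul ζ)

theorem nablaS_nonempty_of_tendsto (hS : ∀ f, Tendsto (fun n => S n f) atTop (𝓝 (T f))) :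
    (nablaS S).Nonempty := by
  obtain ⟨C, hC⟩ := ContinuousLinearMap.exists_norm_le_of_forall_exists_tendsto fun f => ⟨_, hS f⟩
  have hC₀ : 0 ≤ C := (norm_nonneg _).trans (hC 0)
  set r : ℝ := (2 * (C + ‖T‖ + 1))⁻¹
  have hr : 0 < r := by positivity
  have hCT : C + ‖T‖ + 1 ≠ 0 := by positivity
  have hsmall {A : L2op} (hA : ‖A‖ ≤ C + ‖T‖) : ‖(r : ℂ) • A‖ ≤ 1 / 2 := by
    rw [norm_smul, Complex.norm_real, Real.norm_of_nonneg hr.le]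
    calc r * ‖A‖ ≤ r * (C + ‖T‖ + 1) := by gcongr; linarith
      _ = 1 / 2 := by simp only [r]; field_simp
  have hSn n :=
    mem_regularSet_and_norm_res_le_two (hsmall (le_add_of_le_of_nonneg (hC n) (norm_nonneg T)))
  have hT := (mem_regularSet_and_norm_res_le_two (hsmall (le_add_of_nonneg_left hC₀))).1
  have hres (f : L2) : Tendsto (fun n => res (S n) r f) atTop (𝓝 (res T r f)) :=
    ContinuousLinearMap.tendsto_apply_of_mul_eq_one (tendsto_one_sub_smul_apply hS r)
      (.of_forall fun n => (hSn n).2) (.of_forall fun n => res_mul_one_sub_smul (hSn n).1)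
      (one_sub_smul_mul_res hT) f
  have hr₀ : (r : ℂ) ≠ 0 := by exact_mod_cast hr.ne'
  refine ⟨r, mem_nablaB_of_eventually hr₀ (M := 2 * C + 1) (by positivity)
    (.of_forall fun n => ⟨(hSn n).1, ?_⟩), fun f => ?_⟩
  · calc ‖fres (S n) r‖ ≤ ‖S n‖ * ‖res (S n) r‖ := norm_mul_le _ _
      _ ≤ C * 2 := by gcongr; exacts [hC n, (hSn n).2]
      _ ≤ 2 * C + 1 := by linarith
  · refine ⟨(r : ℂ)⁻¹ • (res T r f - f), ((hres f).sub_const f |>.const_smul _).congr fun n => ?_⟩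
    rw [fres_eq_inv_smul_res_sub_one hr₀ (hSn n).1]
    rfl

theorem nablaS_subset_regularSet_of_tendsto
    (hS : ∀ f, Tendsto (fun n => S n f) atTop (𝓝 (T f))) : nablaS S ⊆ regularSet T := by
  rintro ζ ⟨⟨-, _, -, N, hreg⟩, hconv⟩
  choose g hg using hconv
  set G : L2op := continuousLinearMapOfTendsto (fun n => fres (S n) ζ) (tendsto_pi_nhds.2 hg)
  have hregN : ∀ᶠ n in atTop, ζ ∈ regularSet (S n) :=
    (eventually_gt_atTop N).mono fun n hn => (hreg n hn).1
  have hres (f : L2) : Tendsto (fun n => res (S n) ζ f) atTop (𝓝 ((1 + ζ • G) f)) :=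
    (tendsto_const_nhds.add ((hg f).const_smul ζ)).congr' <| hregN.mono fun n hn => by
      simp [res_eq_one_add_smul_fres hn]
  have hX := tendsto_one_sub_smul_apply hS ζ
  exact ⟨⟨_, 1 + ζ • G,
    ContinuousLinearMap.mul_eq_one_of_tendsto hX hres (hregN.mono fun n => one_sub_smul_mul_res),
    ContinuousLinearMap.mul_eq_one_of_tendsto hres hX (hregN.mono fun n => res_mul_one_sub_smul)⟩,
    rfl⟩

theorem nablaS_add_subset_nablaS_add_mul {A P : ℕ → L2op} {b : ℕ → ℂ}
    (hP : ∀ n, P n * P n = P n) (hPA : ∀ n, P n * A n = A n)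
    (hPf : ∀ f, Tendsto (fun n => P n f) atTop (𝓝 f)) (hb : Tendsto b atTop (𝓝 0)) :
    nablaS (fun n => b n • 1 + A n) ⊆ nablaS (fun n => b n • 1 + A n * P n) := by
  rintro ζ ⟨⟨hζ, M, hM, N, hreg⟩, hconv⟩
  have hden : Tendsto (fun n => 1 - ζ * b n) atTop (𝓝 1) := by
    simpa using tendsto_const_nhds.sub (hb.const_mul ζ)
  have hc : Tendsto (fun n => b n * (1 - ζ * b n)⁻¹) atTop (𝓝 0) := by
    simpa using hb.mul (hden.inv₀ one_ne_zero)
  have hQ (f : L2) : Tendsto (fun n => (1 - P n) f) atTop (𝓝 0) := by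
    simpa using (tendsto_const_nhds (x := f)).sub (hPf f)
  obtain ⟨D, hD⟩ := ContinuousLinearMap.exists_norm_le_of_forall_exists_tendsto fun f => ⟨_, hPf f⟩
  have hD₀ : 0 ≤ D := (norm_nonneg _).trans (hD 0)
  have hfres : ∀ᶠ n in atTop, ‖fres (b n • 1 + A n) ζ‖ ≤ M ∧
      ζ ∈ regularSet (b n • 1 + A n * P n) ∧ fres (b n • 1 + A n * P n) ζ =
        fres (b n • 1 + A n) ζ * P n + (b n * (1 - ζ * b n)⁻¹) • (1 - P n) := by
    filter_upwards [eventually_gt_atTop N, hden.eventually_ne one_ne_zero] with n hn hβ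
    exact ⟨(hreg n hn).2, mem_regularSet_and_fres_add_mul_eq hζ hβ (hP n) (hPA n) (hreg n hn).1⟩
  refine ⟨mem_nablaB_of_eventually hζ (M := M * D + (1 + D)) (by positivity) ?_, fun f => ?_⟩
  · filter_upwards [hfres, hc.norm.eventually_le_const (norm_zero.trans_lt one_pos)]
      with n ⟨hfresM, hreg', heq⟩ hc₁
    refine ⟨hreg', heq ▸ ?_⟩
    calc _ ≤ ‖fres (b n • 1 + A n) ζ‖ * ‖P n‖ + ‖b n * (1 - ζ * b n)⁻¹‖ * ‖1 - P n‖ :=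
          norm_add_le_of_le (norm_mul_le _ _) (norm_smul_le _ _)
      _ ≤ M * D + 1 * (1 + D) := by
          gcongr
          · exact hD n
          · exact (norm_sub_le _ _).trans (add_le_add norm_id_le (hD n))
      _ = M * D + (1 + D) := by rw [one_mul]
  · obtain ⟨g, hg⟩ := hconv f
    refine ⟨g, ?_⟩
    have h₁ : Tendsto (fun n => fres (b n • 1 + A n) ζ (P n f)) atTop (𝓝 g) :=
      ContinuousLinearMap.tendsto_apply_of_tendsto_of_eventually_norm_le
        (hfres.mono fun n hn => hn.1) hg (hPf f)
    simpa using (h₁.add (hc.smul (hQ f))).congr' <| hfres.mono fun n hn => by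
      simp [hn.2.2]

end StrongLimit

theorem statement2_general (T : L2op) (K : ℝ → ℝ → ℂ)
    (tau : ℕ → ℝ) (P : ℕ → L2op) (hiv : ConditionIV K T tau P)
    (b : ℕ → ℂ) (hb : Tendsto b atTop (𝓝 (0 : ℂ))) :
    (nablaS (fun n => b n • (1 : L2op) + P n * T)).Nonempty ∧
    nablaS (fun n => b n • (1 : L2op) + P n * T) ⊆ nablaS (fun n => b n • (1 : L2op) + P n * T * P n) ∧
    nablaS (fun n => b n • (1 : L2op) + P n * T * P n) ⊆ regularSet T := by
  have hP n : P n * P n = P n := mul_self_eq_of_coeFn_ae_eq_chi_mul (hiv.proj n)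
  have hPf : ∀ f, Tendsto (fun n => P n f) atTop (𝓝 ((1 : L2op) f)) :=
    tendsto_apply_of_coeFn_ae_eq_chi_mul hiv.tendsto_top hiv.proj
  have hbf (f : L2) : Tendsto (fun n => b n • f) atTop (𝓝 0) := by
    simpa using hb.smul_const f
  have hPT := ContinuousLinearMap.tendsto_mul_apply hPf fun f => tendsto_const_nhds (x := T f)
  refine ⟨nablaS_nonempty_of_tendsto (T := T) fun f => ?_,
    nablaS_add_subset_nablaS_add_mul hP (fun n => by rw [← mul_assoc, hP]) hPf hb,
    nablaS_subset_regularSet_of_tendsto fun f => ?_⟩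
  · simpa using (hbf f).add (hPT f)
  · simpa using (hbf f).add (ContinuousLinearMap.tendsto_mul_apply hPT hPf f)

theorem statement2 (T : L2op) (K : ℝ → ℝ → ℂ) (kt kt' : ℝ → L2)
    (hK : IsK0Kernel K kt kt') (hT : IsInducedBy T K)
    (tau : ℕ → ℝ) (P : ℕ → L2op) (hiv : ConditionIV K T tau P)
    (b : ℕ → ℂ) (hb : Tendsto b atTop (𝓝 (0 : ℂ))) :
    (nablaS (fun n => b n • (1 : L2op) + P n * T)).Nonempty ∧
    nablaS (fun n => b n • (1 : L2op) + P n * T) ⊆ nablaS (fun n => b n • (1 : L2op) + P n * T * P n) ∧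
    nablaS (fun n => b n • (1 : L2op) + P n * T * P n) ⊆ regularSet T :=
  statement2_general T K tau P hiv b hb
end
end

section
/- Let T be a bounded linear operator on L² induced by a K⁰-kernel 𝐓 satisfying condition (iv), let {βₙ} be a complex sequence with βₙ → 0, and set λₙ(λ) = λ(1 − βₙλ)⁻¹. Then for each fixed λ ∈ ∇_s({βₙI + Tₙ}), one has λₙ(λ) ∈ Π(Tₙ) for all sufficiently large n, and sup_{s∈ℝ} ‖𝐭_{n|λₙ(λ)}(s) − 𝐭_{|λ}(s)‖_{L²} → 0 as n → ∞. -/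
open MeasureTheory Filter Topology ContinuousLinearMap
open scoped ENNReal NNReal

noncomputable section

/-!
Write `Sₙ = βₙ I + Tₙ`. As `βₙ → 0` and `Pₙ → I` strongly, `Sₙ → T` strongly, and by uniform
boundedness the limit of the strongly convergent Fredholm resolvents `S_{n|λ}` can be passed
through the identities `S_{n|λ} = Sₙ + λ Sₙ S_{n|λ} = Sₙ + λ S_{n|λ} Sₙ`; hence `λ ∈ Π(T)`.
Since `I - λ Sₙ = (1 - βₙλ)(I - λₙ Tₙ)`, also `λₙ ∈ Π(Tₙ)`, with `R_{λₙ}(Tₙ) = (1 - βₙλ) R_λ(Sₙ)`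
uniformly bounded. With `Xₙ = I - λₙ Tₙ` and `X = I - λ T`, the adjoints satisfy
`R_{λₙ}(Tₙ)* - R_λ(T)* = R_{λₙ}(Tₙ)* (X - Xₙ)* R_λ(T)*`, and `(X - Xₙ)* → 0` strongly. Strong
convergence of a bounded sequence is uniform on totally bounded sets, such as the range of the
continuous curve `s ↦ R_λ(T)* 𝐭(s)`, which vanishes at infinity. Finally `χₙ(s) ≠ 1` only for
`|s| ≥ τₙ`, where `R_λ(T)* 𝐭(s)` is already small.
-/

section ResolventAlgebra

variable {𝕜 R : Type*} [Field 𝕜] [Ring R] [Algebra 𝕜 R]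

theorem ringInverse_one_sub_smul_eq {c : 𝕜} {s : R} (h : IsUnit (1 - c • s)) :
    Ring.inverse (1 - c • s) = 1 + c • (s * Ring.inverse (1 - c • s)) := by
  have h₁ := Ring.mul_inverse_cancel _ h
  rw [sub_mul, one_mul, smul_mul_assoc] at h₁
  exact eq_add_of_sub_eq h₁

theorem mul_ringInverse_one_sub_smul_eq_left {c : 𝕜} {s : R} (h : IsUnit (1 - c • s)) :
    s * Ring.inverse (1 - c • s) = s + c • (s * (s * Ring.inverse (1 - c • s))) := by
  conv_lhs => rw [ringInverse_one_sub_smul_eq h]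
  rw [mul_add, mul_one, mul_smul_comm]

theorem mul_ringInverse_one_sub_smul_eq_right {c : 𝕜} {s : R} (h : IsUnit (1 - c • s)) :
    s * Ring.inverse (1 - c • s) = s + c • (s * Ring.inverse (1 - c • s) * s) := by
  have h₁ := Ring.inverse_mul_cancel _ h
  rw [mul_sub, mul_one, mul_smul_comm] at h₁
  conv_lhs => rw [eq_add_of_sub_eq h₁]
  rw [mul_add, mul_one, mul_smul_comm, mul_assoc]

theorem isUnit_one_sub_smul_of_eq {c : 𝕜} {t a : R} (h₁ : a = t + c • (t * a))
    (h₂ : a = t + c • (a * t)) : IsUnit (1 - c • t) := by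
  refine isUnit_iff_exists.2 ⟨1 + c • a, ?_, ?_⟩
  · calc (1 - c • t) * (1 + c • a) = 1 + c • (a - (t + c • (t * a))) := by
          simp only [sub_mul, mul_add, one_mul, mul_one, smul_mul_smul_comm, smul_add, smul_sub,
            smul_smul]
          abel
      _ = 1 := by rw [← h₁, sub_self, smul_zero, add_zero]
  · calc (1 + c • a) * (1 - c • t) = 1 + c • (a - (t + c • (a * t))) := by
          simp only [add_mul, mul_sub, one_mul, mul_one, smul_mul_smul_comm, smul_add, smul_sub,
            smul_smul]
          abel
      _ = 1 := by rw [← h₂, sub_self, smul_zero, add_zero]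

theorem ringInverse_smul {u : 𝕜} (hu : u ≠ 0) (x : R) :
    Ring.inverse (u • x) = u⁻¹ • Ring.inverse x := by
  have hunit : IsUnit (u • x) ↔ IsUnit x := isUnit_smul_iff (Units.mk0 u hu) x
  by_cases hx : IsUnit x
  · have h₁ : u • x * (u⁻¹ • Ring.inverse x) = 1 := by
      rw [smul_mul_smul_comm, mul_inv_cancel₀ hu, one_smul, Ring.mul_inverse_cancel _ hx]
    calc Ring.inverse (u • x) = Ring.inverse (u • x) * (u • x * (u⁻¹ • Ring.inverse x)) := by
          rw [h₁, mul_one]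
      _ = u⁻¹ • Ring.inverse x := Ring.inverse_mul_cancel_left _ _ (hunit.2 hx)
  · rw [Ring.inverse_non_unit _ hx, Ring.inverse_non_unit _ (mt hunit.1 hx), smul_zero]

theorem one_sub_smul_eq_inv_smul_one_sub_smul_add {b c : 𝕜} (hbc : 1 - b * c ≠ 0) (s : R) :
    1 - (c * (1 - b * c)⁻¹) • s = (1 - b * c)⁻¹ • (1 - c • (b • 1 + s)) := by
  match_scalars <;> field_simp

end ResolventAlgebra

theorem totallyBounded_range_of_tendsto_cocompact {X E : Type*} [TopologicalSpace X]
    [PseudoMetricSpace E] {g : X → E}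
    (hg : Continuous g) {a : E} (ha : Tendsto g (cocompact X) (𝓝 a)) :
    TotallyBounded (Set.range g) := by
  rw [Metric.totallyBounded_iff]
  intro ε hε
  obtain ⟨C, hC, hCε⟩ := mem_cocompact.1 (ha (Metric.ball_mem_nhds a hε))
  obtain ⟨t, ht, hCt⟩ := Metric.totallyBounded_iff.1 (hC.image hg).totallyBounded ε hε
  refine ⟨insert a t, ht.insert a, ?_⟩
  rintro _ ⟨x, rfl⟩
  by_cases hx : x ∈ C
  · obtain ⟨y, hy, hxy⟩ := Set.mem_iUnion₂.1 (hCt ⟨x, hx, rfl⟩)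
    exact Set.mem_iUnion₂.2 ⟨y, Set.mem_insert_of_mem _ hy, hxy⟩
  · exact Set.mem_iUnion₂.2 ⟨a, Set.mem_insert _ _, hCε hx⟩

section StrongConvergence

variable {𝕜 E F X : Type*} [NontriviallyNormedField 𝕜] [NormedAddCommGroup E] [NormedSpace 𝕜 E]
  [NormedAddCommGroup F] [NormedSpace 𝕜 F] [CompleteSpace E]

theorem exists_norm_le_of_tendsto_apply {A : ℕ → E →L[𝕜] F} {B : E → F}
    (h : ∀ x, Tendsto (fun n => A n x) atTop (𝓝 (B x))) : ∃ C, ∀ n, ‖A n‖ ≤ C :=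
  banach_steinhaus fun x =>
    let ⟨C, hC⟩ := (Metric.isBounded_range_of_tendsto _ (h x)).exists_norm_le
    ⟨C, fun n => hC _ ⟨n, rfl⟩⟩

theorem tendsto_apply_of_tendsto_pointwise {A : ℕ → E →L[𝕜] F} {B : E →L[𝕜] F}
    (h : ∀ x, Tendsto (fun n => A n x) atTop (𝓝 (B x))) {x : ℕ → E} {y : E}
    (hx : Tendsto x atTop (𝓝 y)) : Tendsto (fun n => A n (x n)) atTop (𝓝 (B y)) := by
  obtain ⟨C, hC⟩ := exists_norm_le_of_tendsto_apply h
  rw [tendsto_iff_norm_sub_tendsto_zero] at hx ⊢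
  have hlim : Tendsto (fun n => C * ‖x n - y‖ + ‖A n y - B y‖) atTop (𝓝 0) := by
    simpa using (hx.const_mul C).add (tendsto_iff_norm_sub_tendsto_zero.1 (h y))
  refine squeeze_zero (fun _ => norm_nonneg _) (fun n => ?_) hlim
  calc ‖A n (x n) - B y‖ = ‖A n (x n - y) + (A n y - B y)‖ := by rw [map_sub]; abel_nf
    _ ≤ ‖A n (x n - y)‖ + ‖A n y - B y‖ := norm_add_le _ _
    _ ≤ C * ‖x n - y‖ + ‖A n y - B y‖ := by gcongr; exact (A n).le_of_opNorm_le (hC n) _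

theorem tendstoUniformlyOn_apply_of_totallyBounded {A : ℕ → E →L[𝕜] F}
    (h : ∀ x, Tendsto (fun n => A n x) atTop (𝓝 0)) {K : Set E} (hK : TotallyBounded K) :
    TendstoUniformlyOn (fun n x => A n x) 0 atTop K := by
  obtain ⟨C, hC⟩ := exists_norm_le_of_tendsto_apply (B := fun _ => 0) h
  have hC₀ : 0 < C + 1 := by linarith [(norm_nonneg _).trans (hC 0)]
  rw [Metric.tendstoUniformlyOn_iff]
  intro ε hε
  obtain ⟨t, ht, hKt⟩ := Metric.totallyBounded_iff.1 hK (ε / (2 * (C + 1))) (by positivity)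
  have hnet : ∀ᶠ n in atTop, ∀ y ∈ t, ‖A n y‖ < ε / 2 :=
    (ht.eventually_all).2 fun y _ => (tendsto_zero_iff_norm_tendsto_zero.1 (h y)).eventually
      (gt_mem_nhds (by positivity))
  filter_upwards [hnet] with n hn x hx
  obtain ⟨y, hy, hxy⟩ := Set.mem_iUnion₂.1 (hKt hx)
  rw [Metric.mem_ball, dist_eq_norm] at hxy
  rw [Pi.zero_apply, dist_zero_left]
  calc ‖A n x‖ = ‖A n (x - y) + A n y‖ := by rw [map_sub, sub_add_cancel]
    _ ≤ ‖A n‖ * ‖x - y‖ + ‖A n y‖ := norm_add_le_of_le ((A n).le_opNorm _) le_rfl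
    _ < (C + 1) * (ε / (2 * (C + 1))) + ε / 2 := by
        gcongr ?_ + ?_
        · exact mul_lt_mul' ((hC n).trans (by linarith)) hxy (norm_nonneg _) hC₀
        · exact hn y hy
    _ = ε := by field_simp; ring

theorem tendstoUniformly_apply_comp_of_tendsto_cocompact [TopologicalSpace X]
    {A : ℕ → E →L[𝕜] F} (h : ∀ x, Tendsto (fun n => A n x) atTop (𝓝 0)) {g : X → E}
    (hg : Continuous g) (hg₀ : Tendsto g (cocompact X) (𝓝 0)) :
    TendstoUniformly (fun n s => A n (g s)) 0 atTop := by
  have := (tendstoUniformlyOn_apply_of_totallyBounded h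
    (totallyBounded_range_of_tendsto_cocompact hg hg₀)).comp g
  rwa [Set.preimage_range, tendstoUniformlyOn_univ] at this

theorem tendstoUniformly_ringInverse_apply [TopologicalSpace X] {Y : E →L[𝕜] E}
    {Yn : ℕ → E →L[𝕜] E} {C : ℝ} (hY : IsUnit Y) (hYn : ∀ᶠ n in atTop, IsUnit (Yn n))
    (hbd : ∀ᶠ n in atTop, ‖Ring.inverse (Yn n)‖ ≤ C)
    (hconv : ∀ x, Tendsto (fun n => Yn n x) atTop (𝓝 (Y x))) {k : X → E} (hk : Continuous k)
    (hk₀ : Tendsto k (cocompact X) (𝓝 0)) :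
    TendstoUniformly (fun n s => Ring.inverse (Yn n) (k s)) (fun s => Ring.inverse Y (k s))
      atTop := by
  have hdiff := tendstoUniformly_apply_comp_of_tendsto_cocompact (A := fun n => Y - Yn n)
    (fun x => by simpa using (tendsto_const_nhds (x := Y x)).sub (hconv x))
    ((Ring.inverse Y).continuous.comp hk)
    (by simpa using ((Ring.inverse Y).continuous.tendsto 0).comp hk₀)
  rw [Metric.tendstoUniformly_iff] at hdiff ⊢
  have hC : 0 ≤ C := let ⟨_, hn⟩ := hbd.exists; (norm_nonneg _).trans hn
  intro ε hε
  filter_upwards [hYn, hbd, hdiff (ε / (C + 1)) (by positivity)] with n hun hbn hn s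
  have hsub : Ring.inverse (Yn n) (k s) - Ring.inverse Y (k s)
      = Ring.inverse (Yn n) ((Y - Yn n) (Ring.inverse Y (k s))) := by
    rw [← sub_apply, Ring.inverse_sub_inverse ⟨fun _ => hY, fun _ => hun⟩]; rfl
  specialize hn s
  rw [Pi.zero_apply, dist_zero_left] at hn
  rw [dist_comm, dist_eq_norm, hsub]
  calc _ ≤ C * ‖(Y - Yn n) (Ring.inverse Y (k s))‖ := le_of_opNorm_le _ hbn _
    _ ≤ (C + 1) * ‖(Y - Yn n) (Ring.inverse Y (k s))‖ := by gcongr; linarith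
    _ < (C + 1) * (ε / (C + 1)) := by gcongr; exact hn
    _ = ε := by field_simp

end StrongConvergence

section Resolvent

variable {𝕜 E : Type*} [NontriviallyNormedField 𝕜] [NormedAddCommGroup E] [NormedSpace 𝕜 E]

theorem norm_ringInverse_one_sub_smul_le {c : 𝕜} {S : E →L[𝕜] E} (h : IsUnit (1 - c • S)) :
    ‖Ring.inverse (1 - c • S)‖ ≤ 1 + ‖c‖ * ‖S * Ring.inverse (1 - c • S)‖ := by
  nth_rw 1 [ringInverse_one_sub_smul_eq h]
  exact norm_add_le_of_le norm_id_le (norm_smul_le _ _)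

theorem isUnit_one_sub_smul_of_tendsto [CompleteSpace E] {S : ℕ → E →L[𝕜] E} {T : E →L[𝕜] E}
    {c : 𝕜} (hS : ∀ x, Tendsto (fun n => S n x) atTop (𝓝 (T x)))
    (hunit : ∀ᶠ n in atTop, IsUnit (1 - c • S n))
    (hF : ∀ x, ∃ y, Tendsto (fun n => (S n * Ring.inverse (1 - c • S n)) x) atTop (𝓝 y)) :
    IsUnit (1 - c • T) := by
  set F := fun n => S n * Ring.inverse (1 - c • S n)
  choose B hB using hF
  set A : E →L[𝕜] E := continuousLinearMapOfTendsto F (tendsto_pi_nhds.2 hB)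
  have hA : ∀ x, Tendsto (fun n => F n x) atTop (𝓝 (A x)) := hB
  refine isUnit_one_sub_smul_of_eq (a := A) (ext fun x => ?_) (ext fun x => ?_)
  · refine tendsto_nhds_unique (hA x) (((hS x).add ((tendsto_apply_of_tendsto_pointwise hS
      (hA x)).const_smul c)).congr' (hunit.mono fun n hn => ?_))
    simpa [F] using (congrArg (fun G => G x) (mul_ringInverse_one_sub_smul_eq_left hn)).symm
  · refine tendsto_nhds_unique (hA x) (((hS x).add ((tendsto_apply_of_tendsto_pointwise hA
      (hS x)).const_smul c)).congr' (hunit.mono fun n hn => ?_))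
    simpa [F] using (congrArg (fun G => G x) (mul_ringInverse_one_sub_smul_eq_right hn)).symm

theorem eventually_isUnit_and_norm_le_of_shift {b : ℕ → 𝕜} (hb : Tendsto b atTop (𝓝 0))
    {c : 𝕜} {A : ℕ → E →L[𝕜] E} {M : ℝ}
    (h : ∀ᶠ n in atTop, IsUnit (1 - c • (b n • 1 + A n)) ∧
      ‖(b n • 1 + A n) * Ring.inverse (1 - c • (b n • 1 + A n))‖ ≤ M) :
    ∀ᶠ n in atTop, IsUnit (1 - (c * (1 - b n * c)⁻¹) • A n) ∧
      ‖Ring.inverse (1 - (c * (1 - b n * c)⁻¹) • A n)‖ ≤ 2 * (1 + ‖c‖ * M) := by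
  have hscale : Tendsto (fun n => 1 - b n * c) atTop (𝓝 1) := by
    simpa using (tendsto_const_nhds (x := (1 : 𝕜))).sub (hb.mul_const c)
  filter_upwards [h, hscale.eventually_ne one_ne_zero,
    hscale.norm.eventually (gt_mem_nhds (by norm_num : ‖(1 : 𝕜)‖ < 2))] with n ⟨hu, hM⟩ hne h2
  rw [one_sub_smul_eq_inv_smul_one_sub_smul_add hne, ringInverse_smul (inv_ne_zero hne), inv_inv,
    norm_smul]
  refine ⟨(isUnit_smul_iff (Units.mk0 _ (inv_ne_zero hne)) _).2 hu, ?_⟩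
  exact mul_le_mul h2.le ((norm_ringInverse_one_sub_smul_le hu).trans (by gcongr))
    (norm_nonneg _) zero_le_two

end Resolvent

theorem tendsto_star_one_sub_smul_mul_apply {𝕜 H : Type*} [RCLike 𝕜] [NormedAddCommGroup H]
    [InnerProductSpace 𝕜 H] [CompleteSpace H] {P : ℕ → H →L[𝕜] H}
    (hPs : ∀ n, IsSelfAdjoint (P n)) (hP : ∀ x, Tendsto (fun n => P n x) atTop (𝓝 x))
    {c : ℕ → 𝕜} {c₀ : 𝕜} (hc : Tendsto c atTop (𝓝 c₀)) (T : H →L[𝕜] H) (x : H) :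
    Tendsto (fun n => star (1 - c n • (P n * T)) x) atTop (𝓝 (star (1 - c₀ • T) x)) := by
  simp only [star_sub, star_one, star_smul, star_mul, fun n => (hPs n).star_eq, sub_apply,
    smul_apply]
  exact tendsto_const_nhds.sub (hc.star.smul (((star T).continuous.tendsto x).comp (hP x)))

theorem tendsto_eLpNorm_indicator_compl {α E : Type*} [MeasurableSpace α] [NormedAddCommGroup E]
    {μ : Measure α} {p : ℝ≥0∞} (hp : p ≠ ∞) {f : α → E} (hf : MemLp f p μ) {s : ℕ → Set α}
    (hs : ∀ n, MeasurableSet (s n)) (hmem : ∀ x, ∀ᶠ n in atTop, x ∈ s n) :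
    Tendsto (fun n => eLpNorm ((s n)ᶜ.indicator f) p μ) atTop (𝓝 0) := by
  rcases eq_or_ne p 0 with rfl | hp₀
  · simp
  simp_rw [eLpNorm_eq_lintegral_rpow_enorm_toReal hp₀ hp]
  have hlim : Tendsto (fun n => ∫⁻ x, ‖(s n)ᶜ.indicator f x‖ₑ ^ p.toReal ∂μ) atTop
      (𝓝 (∫⁻ _, 0 ∂μ)) := by
    refine tendsto_lintegral_of_dominated_convergence' (fun x => ‖f x‖ₑ ^ p.toReal)
      (fun n => (hf.1.indicator (hs n).compl).enorm.pow_const _) (fun n => ?_)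
      (lintegral_rpow_enorm_lt_top_of_eLpNorm_lt_top hp₀ hp hf.2).ne (ae_of_all _ fun x => ?_)
    · exact ae_of_all _ fun x =>
        ENNReal.rpow_le_rpow (enorm_indicator_le_enorm_self _ _) ENNReal.toReal_nonneg
    · refine tendsto_const_nhds.congr' ((hmem x).mono fun n hn => ?_)
      simp [hn, ENNReal.zero_rpow_of_pos (ENNReal.toReal_pos hp₀ hp)]
  rw [lintegral_zero] at hlim
  simpa [Function.comp_def, ENNReal.zero_rpow_of_pos (inv_pos.2 (ENNReal.toReal_pos hp₀ hp))] using
    ((ENNReal.continuous_rpow_const (y := p.toReal⁻¹)).tendsto 0).comp hlim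

theorem chi_mul_eq_indicator (τ x : ℝ) (f : ℝ → ℂ) :
    chi τ x * f x = (Set.Ioo (-τ) τ).indicator f x := by
  by_cases hx : x ∈ Set.Ioo (-τ) τ <;> simp [chi, hx]

theorem star_chi (τ x : ℝ) : star (chi τ x) = chi τ x := by
  by_cases hx : x ∈ Set.Ioo (-τ) τ <;> simp [chi, hx]

def IsMulChi (τ : ℝ) (P : L2op) : Prop :=
  ∀ f : L2, (P f : ℝ → ℂ) =ᵐ[volume] fun x => chi τ x * (f : ℝ → ℂ) x

theorem IsMulChi.isSelfAdjoint {τ : ℝ} {P : L2op} (hP : IsMulChi τ P) : IsSelfAdjoint P := by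
  rw [IsSelfAdjoint, star_eq_adjoint, eq_comm, eq_adjoint_iff]
  intro f g
  rw [L2.inner_def, L2.inner_def]
  refine integral_congr_ae ?_
  filter_upwards [hP f, hP g] with x hf hg
  simp only [hf, hg, RCLike.inner_apply, map_mul, starRingEnd_apply, star_chi]
  ring

theorem tendsto_apply_of_isMulChi {τ : ℕ → ℝ} {P : ℕ → L2op} (hP : ∀ n, IsMulChi (τ n) (P n))
    (hτ : Tendsto τ atTop atTop) (f : L2) : Tendsto (fun n => P n f) atTop (𝓝 f) := by
  have hnorm : ∀ n,
      ‖P n f - f‖ = (eLpNorm ((Set.Ioo (-τ n) (τ n))ᶜ.indicator f) 2 volume).toReal := by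
    intro n
    rw [norm_sub_rev, Lp.norm_def]
    congr 1
    refine eLpNorm_congr_ae ?_
    filter_upwards [Lp.coeFn_sub f (P n f), hP n f] with x hsub hPx
    rw [hsub, Pi.sub_apply, hPx, chi_mul_eq_indicator, Set.indicator_compl, Pi.sub_apply]
  rw [tendsto_iff_norm_sub_tendsto_zero]
  simp_rw [hnorm]
  exact (ENNReal.tendsto_toReal ENNReal.zero_ne_top).comp <|
    tendsto_eLpNorm_indicator_compl ENNReal.ofNat_ne_top (Lp.memLp f)
      (fun _ => measurableSet_Ioo) fun x =>
        (hτ.eventually_gt_atTop |x|).mono fun _ hn => abs_lt.1 hn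

theorem tendsto_lamn {b : ℕ → ℂ} (hb : Tendsto b atTop (𝓝 0)) (lam : ℂ) :
    Tendsto (lamn b lam) atTop (𝓝 lam) := by
  show Tendsto (fun n => lam * (1 - b n * lam)⁻¹) atTop (𝓝 lam)
  simpa using (tendsto_const_nhds (x := lam)).mul
    (((tendsto_const_nhds (x := (1 : ℂ))).sub (hb.mul_const lam)).inv₀ (by simp))

theorem tendsto_iSup_norm_chi_smul_sub {E : Type*} [NormedAddCommGroup E] [NormedSpace ℂ E]
    {F : ℕ → ℝ → E} {f : ℝ → E} {τ : ℕ → ℝ} (hF : TendstoUniformly F f atTop)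
    (hf : Tendsto f (cocompact ℝ) (𝓝 0)) (hτ : Tendsto τ atTop atTop) :
    Tendsto (fun n => ⨆ s, ‖chi (τ n) s • F n s - f s‖) atTop (𝓝 0) := by
  rw [Metric.tendstoUniformly_iff] at hF
  rw [Metric.tendsto_nhds]
  intro ε hε
  have hfar := (tendsto_zero_iff_norm_tendsto_zero.1 hf).eventually (gt_mem_nhds (half_pos hε))
  rw [← Metric.cobounded_eq_cocompact, hasBasis_cobounded_norm.eventually_iff] at hfar
  obtain ⟨r, -, hr⟩ := hfar
  filter_upwards [hF (ε / 2) (half_pos hε), hτ.eventually_ge_atTop r] with n hn hτn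
  have hle : ∀ s, ‖chi (τ n) s • F n s - f s‖ ≤ ε / 2 := by
    intro s
    by_cases hs : s ∈ Set.Ioo (-τ n) (τ n)
    · simpa [chi, hs, dist_eq_norm, norm_sub_rev] using (hn s).le
    · simp only [chi, hs, Set.indicator_of_notMem, not_false_eq_true, zero_smul, zero_sub,
        norm_neg]
      refine (hr (hτn.trans ?_)).le
      rw [Real.norm_eq_abs]
      by_contra! h
      exact hs (abs_lt.1 h)
  rw [Real.dist_eq, sub_zero, abs_of_nonneg (Real.iSup_nonneg fun _ => norm_nonneg _)]
  exact (Real.iSup_le hle (half_pos hε).le).trans_lt (half_lt_self hε)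

theorem statement5_general (T : L2op) (K : ℝ → ℝ → ℂ) (kt kt' : ℝ → L2)
    (hK : IsK0Kernel K kt kt')
    (tau : ℕ → ℝ) (P : ℕ → L2op) (hiv : ConditionIV K T tau P)
    (b : ℕ → ℂ) (hb : Tendsto b atTop (𝓝 (0 : ℂ)))
    (lam : ℂ) (hlam : lam ∈ nablaS (fun n => b n • (1 : L2op) + P n * T)) :
    (∀ᶠ n in atTop, lamn b lam n ∈ regularSet (P n * T)) ∧
    Tendsto (fun n => ⨆ s : ℝ,
        ‖chi (tau n) s • (adjoint (res (P n * T) (lamn b lam n))) (kt s)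
          - (adjoint (res T lam)) (kt s)‖)
      atTop (𝓝 (0 : ℝ)) := by
  obtain ⟨⟨-, M, -, N, hbd⟩, hconv⟩ := hlam
  have hPf := tendsto_apply_of_isMulChi hiv.proj hiv.tendsto_top
  have hS := (eventually_gt_atTop N).mono hbd
  have hT : IsUnit (1 - lam • T) :=
    isUnit_one_sub_smul_of_tendsto (fun f => by simpa using (hb.smul_const f).add (hPf (T f)))
      (hS.mono fun n h => h.1) hconv
  have hRn := eventually_isUnit_and_norm_le_of_shift hb hS
  refine ⟨hRn.mono fun n h => h.1, ?_⟩
  have hU := tendstoUniformly_ringInverse_apply hT.star (hRn.mono fun n h => h.1.star)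
    (hRn.mono fun n h => by rw [Ring.inverse_star, norm_star]; exact h.2)
    (tendsto_star_one_sub_smul_mul_apply (fun n => IsMulChi.isSelfAdjoint (hiv.proj n)) hPf
      (tendsto_lamn hb lam) T) hK.cont_t hK.vanish_t
  simp only [← star_eq_adjoint, res, ← Ring.inverse_star]
  exact tendsto_iSup_norm_chi_smul_sub hU
    (by simpa only [map_zero, Function.comp_def] using
      ((Ring.inverse (star (1 - lam • T))).continuous.tendsto 0).comp hK.vanish_t) hiv.tendsto_top

theorem statement5 (T : L2op) (K : ℝ → ℝ → ℂ) (kt kt' : ℝ → L2)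
    (hK : IsK0Kernel K kt kt') (hT : IsInducedBy T K)
    (tau : ℕ → ℝ) (P : ℕ → L2op) (hiv : ConditionIV K T tau P)
    (b : ℕ → ℂ) (hb : Tendsto b atTop (𝓝 (0 : ℂ)))
    (lam : ℂ) (hlam : lam ∈ nablaS (fun n => b n • (1 : L2op) + P n * T)) :
    (∀ᶠ n in atTop, lamn b lam n ∈ regularSet (P n * T)) ∧
    Tendsto (fun n => ⨆ s : ℝ,
        ‖chi (tau n) s • (adjoint (res (P n * T) (lamn b lam n))) (kt s)
          - (adjoint (res T lam)) (kt s)‖)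
      atTop (𝓝 (0 : ℝ)) :=
  statement5_general T K kt kt' hK tau P hiv b hb lam hlam
end
end
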